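/- Let M be a right R-module. Then M is an SSP module if and only if for any two direct summands A₁ and A₂ of M with A₁ ≅ A₂, the submodule A₁ + A₂ is a direct summand of M. -/

import Mathlib

universe u v w

section Defs

variable {S : Type u} [Ring S]

/-- A submodule `A` is a direct summand of `M`. -/
def IsDirectSummand {M : Type v} [AddCommGroup M] [Module S M] (A : Submodule S M) : Prop :=
  ∃ B : Submodule S M, A ⊓ B = ⊥ ∧ A ⊔ B = ⊤

/-- `A` is an essential submodule of `B`. -/
def IsEssentialIn {M : Type v} [AddCommGroup M] [Module S M] (A B : Submodule S M) : Prop :=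
  A ≤ B ∧ ∀ K : Submodule S M, K ≤ B → K ≠ ⊥ → A ⊓ K ≠ ⊥

/-- `A` is essential in some direct summand of `M`. -/
def EssentialInSummand {M : Type v} [AddCommGroup M] [Module S M] (A : Submodule S M) : Prop :=
  ∃ D : Submodule S M, IsDirectSummand D ∧ IsEssentialIn A D

/-- `A` is a small (superfluous) submodule of `M`. -/
def IsSmallSubmodule {M : Type v} [AddCommGroup M] [Module S M] (A : Submodule S M) : Prop :=
  ∀ K : Submodule S M, A ⊔ K = ⊤ → K = ⊤

/-- `A` lies above the direct summand `D` of `M`, i.e. `D ≤ A` and `A/D` is small in `M/D`. -/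
def LiesAbove {M : Type v} [AddCommGroup M] [Module S M] (A D : Submodule S M) : Prop :=
  IsDirectSummand D ∧ D ≤ A ∧ IsSmallSubmodule (Submodule.map D.mkQ A)

/-- `A` lies above some direct summand of `M`. -/
def LiesAboveSummand {M : Type v} [AddCommGroup M] [Module S M] (A : Submodule S M) : Prop :=
  ∃ D : Submodule S M, LiesAbove A D

end Defs

section ModDefs

variable (S : Type u) [Ring S]

/-- SSP: the sum of any two direct summands is a direct summand. -/
def HasSSP (M : Type v) [AddCommGroup M] [Module S M] : Prop :=
  ∀ A B : Submodule S M, IsDirectSummand A → IsDirectSummand B → IsDirectSummand (A ⊔ B)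

/-- SIP: the intersection of any two direct summands is a direct summand. -/
def HasSIP (M : Type v) [AddCommGroup M] [Module S M] : Prop :=
  ∀ A B : Submodule S M, IsDirectSummand A → IsDirectSummand B → IsDirectSummand (A ⊓ B)

/-- SIP-CS: the intersection of any finite family of direct summands is essential in a
direct summand. -/
def IsSIPCS (M : Type v) [AddCommGroup M] [Module S M] : Prop :=
  ∀ (ι : Type) [Fintype ι] (A : ι → Submodule S M),
    (∀ i, IsDirectSummand (A i)) → EssentialInSummand (⨅ i, A i)

/-- SSP-lifting: if each member of a finite family of submodules lies above a direct summand,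
then their sum lies above a direct summand. -/
def IsSSPLifting (M : Type v) [AddCommGroup M] [Module S M] : Prop :=
  ∀ (ι : Type) [Fintype ι] (A : ι → Submodule S M),
    (∀ i, LiesAboveSummand (A i)) → LiesAboveSummand (⨆ i, A i)

/-- C2 condition: every submodule isomorphic to a direct summand is a direct summand. -/
def HasC2 (M : Type v) [AddCommGroup M] [Module S M] : Prop :=
  ∀ A B : Submodule S M, IsDirectSummand B → Nonempty (A ≃ₗ[S] B) → IsDirectSummand A

/-- C3 condition: the sum of two direct summands with zero intersection is a direct summand. -/
def HasC3 (M : Type v) [AddCommGroup M] [Module S M] : Prop :=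
  ∀ A B : Submodule S M, IsDirectSummand A → IsDirectSummand B → A ⊓ B = ⊥ →
    IsDirectSummand (A ⊔ B)

/-- D2 condition: if `M/A` is isomorphic to a direct summand of `M` then `A` is a direct
summand. -/
def HasD2 (M : Type v) [AddCommGroup M] [Module S M] : Prop :=
  ∀ A : Submodule S M, (∃ B : Submodule S M, IsDirectSummand B ∧
    Nonempty ((M ⧸ A) ≃ₗ[S] B)) → IsDirectSummand A

/-- D3 condition: if two direct summands sum to `M`, their intersection is a direct summand. -/
def IsD3Module (M : Type v) [AddCommGroup M] [Module S M] : Prop :=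
  ∀ A B : Submodule S M, IsDirectSummand A → IsDirectSummand B → A ⊔ B = ⊤ →
    IsDirectSummand (A ⊓ B)

/-- `M` is relatively CS-Rickart to `N`. -/
def RelCSRickart (M : Type v) (N : Type w) [AddCommGroup M] [Module S M]
    [AddCommGroup N] [Module S N] : Prop :=
  ∀ φ : M →ₗ[S] N, EssentialInSummand (LinearMap.ker φ)

/-- `M` is relatively d-CS-Rickart to `N`. -/
def RelDCSRickart (M : Type v) (N : Type w) [AddCommGroup M] [Module S M]
    [AddCommGroup N] [Module S N] : Prop :=
  ∀ φ : N →ₗ[S] M, LiesAboveSummand (LinearMap.range φ)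

/-- CS-Rickart module. -/
def IsCSRickart (M : Type v) [AddCommGroup M] [Module S M] : Prop :=
  RelCSRickart S M M

/-- d-CS-Rickart module. -/
def IsDCSRickart (M : Type v) [AddCommGroup M] [Module S M] : Prop :=
  RelDCSRickart S M M

/-- `M` has an `Ω`-cover, where `Ω` is the class of modules satisfying `P`. -/
def HasCover (P : ModuleCat.{v} S → Prop) (M : Type v) [AddCommGroup M] [Module S M] : Prop :=
  ∃ (E : ModuleCat.{v} S) (g : E →ₗ[S] M), P E ∧
    (∀ (E' : ModuleCat.{v} S), P E' → ∀ g' : E' →ₗ[S] M,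
      ∃ h : E' →ₗ[S] E, g ∘ₗ h = g') ∧
    (∀ h : E →ₗ[S] E, g ∘ₗ h = g → Function.Bijective h)

/-- `M` has an `Ω`-envelope, where `Ω` is the class of modules satisfying `P`. -/
def HasEnvelope (P : ModuleCat.{v} S → Prop) (M : Type v) [AddCommGroup M] [Module S M] : Prop :=
  ∃ (E : ModuleCat.{v} S) (g : M →ₗ[S] E), P E ∧
    (∀ (E' : ModuleCat.{v} S), P E' → ∀ g' : M →ₗ[S] E',
      ∃ h : E →ₗ[S] E', h ∘ₗ g = g') ∧
    (∀ h : E →ₗ[S] E, h ∘ₗ g = g → Function.Bijective h)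

/-- `M` is 2-generated. -/
def TwoGenerated (M : Type v) [AddCommGroup M] [Module S M] : Prop :=
  ∃ a b : M, Submodule.span S ({a, b} : Set M) = ⊤

/-- `M` is finitely cogenerated. -/
def FinitelyCogenerated (M : Type v) [AddCommGroup M] [Module S M] : Prop :=
  ∀ 𝒜 : Set (Submodule S M), sInf 𝒜 = ⊥ →
    ∃ ℬ ⊆ 𝒜, ℬ.Finite ∧ sInf ℬ = ⊥

/-- The socle of `M`: the sum of all simple submodules. -/
def SocleOf (M : Type v) [AddCommGroup M] [Module S M] : Submodule S M :=
  sSup {A : Submodule S M | IsSimpleModule S ↥A}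

/-- An indecomposable module: nonzero, and its only direct summands are `0` and itself. -/
def IsIndecomposable (M : Type v) [AddCommGroup M] [Module S M] : Prop :=
  (⊤ : Submodule S M) ≠ ⊥ ∧
    ∀ A : Submodule S M, IsDirectSummand A → A = ⊥ ∨ A = ⊤

end ModDefs

section RingDefs

variable (R : Type u) [Ring R]

/-- The right annihilator of an element of a right `R`-module, as a right ideal of `R`. -/
def rightAnnihilator {M : Type v} [AddCommGroup M] [Module Rᵐᵒᵖ M] (m : M) :
    Submodule Rᵐᵒᵖ R where
  carrier := {r : R | MulOpposite.op r • m = 0}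
  add_mem' := by
    intro a b ha hb
    simp only [Set.mem_setOf_eq] at *
    rw [MulOpposite.op_add, add_smul, ha, hb, add_zero]
  zero_mem' := by simp
  smul_mem' := by
    intro c x hx
    simp only [Set.mem_setOf_eq] at *
    have : MulOpposite.op (c • x) = c * MulOpposite.op x := by
      rw [MulOpposite.smul_eq_mul_unop]
      simp [MulOpposite.op_mul]
    rw [this, mul_smul, hx, smul_zero]

/-- `M` is a nonsingular right `R`-module. -/
def IsNonsingular (M : Type v) [AddCommGroup M] [Module Rᵐᵒᵖ M] : Prop :=
  ∀ m : M, IsEssentialIn (rightAnnihilator R m) (⊤ : Submodule Rᵐᵒᵖ R) → m = 0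

/-- `R` is a right V-ring: every simple right `R`-module is injective. -/
def IsRightVRing : Prop :=
  ∀ (N : Type u) [AddCommGroup N] [Module Rᵐᵒᵖ N],
    IsSimpleModule Rᵐᵒᵖ N → Module.Injective Rᵐᵒᵖ N

/-- `R` is semiregular: `R/J(R)` is von Neumann regular and idempotents lift modulo `J(R)`. -/
def IsSemiregularRing : Prop :=
  (∀ a : R, ∃ b : R, a - a * b * a ∈ Ideal.jacobson (⊥ : Ideal R) ∧ b = b * a * b) ∧
  (∀ a : R, a * a - a ∈ Ideal.jacobson (⊥ : Ideal R) →
    ∃ e : R, e * e = e ∧ e - a ∈ Ideal.jacobson (⊥ : Ideal R))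

end RingDefs

/-! Write `M = A ⊕ A'` and let `q` be the projection onto `A'` along `A`, so that
`A + B = A ⊕ q(B)`. If `f` is the projection onto `B` along `B'`, the graph of
`(1 - f) ∘ q` on `B` is a complement of `B'` isomorphic to `B`, and its sum with `B` is
`B + q(B) = (1 - q)(B) ⊕ q(B)`. By hypothesis this is a direct summand, hence so is `q(B)`;
and in a modular lattice a summand lying inside `A'` can be added to `A`. -/

theorem IsCompl.isCompl_sup_inf_of_le_right {α : Type*} [Lattice α] [BoundedOrder α]
    [IsModularLattice α] {a b c d : α} (hab : IsCompl a b) (hcb : c ≤ b) (hcd : IsCompl c d) :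
    IsCompl (a ⊔ c) (d ⊓ b) := by
  have hb : c ⊔ d ⊓ b = b := by
    rw [← sup_inf_assoc_of_le d hcb, hcd.sup_eq_top, top_inf_eq]
  exact (hcd.disjoint.mono_right inf_le_left).isCompl_sup_left_of_isCompl_sup_right (by rwa [hb])

namespace Submodule

variable {S : Type*} [Ring S] {M : Type*} [AddCommGroup M] [Module S M]

theorem isDirectSummand_iff_exists_isCompl {A : Submodule S M} :
    IsDirectSummand A ↔ ∃ B, IsCompl A B := by
  simp only [IsDirectSummand, isCompl_iff, disjoint_iff, codisjoint_iff]

theorem sup_map_eq_of_sub_mem {A N : Submodule S M} {g : M →ₗ[S] M}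
    (h : ∀ x ∈ N, x - g x ∈ A) : A ⊔ N.map g = A ⊔ N := by
  refine le_antisymm (sup_le le_sup_left ?_) (sup_le le_sup_left fun x hx ↦ ?_)
  · rintro _ ⟨x, hx, rfl⟩
    simpa using sub_mem (mem_sup_right hx) (mem_sup_left (h x hx) : x - g x ∈ A ⊔ N)
  · simpa using add_mem (mem_sup_left (h x hx)) (mem_sup_right (mem_map_of_mem hx) :
      g x ∈ A ⊔ N.map g)

variable {B B' : Submodule S M} {φ : B →ₗ[S] M}

theorem injective_subtype_add (hB : Disjoint B B') (hφ : LinearMap.range φ ≤ B') :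
    Function.Injective (B.subtype + φ) := by
  refine (injective_iff_map_eq_zero _).2 fun b hb ↦ ?_
  have hb' : (b : M) = -φ b := eq_neg_of_add_eq_zero_left hb
  have : (b : M) ∈ B' := hb' ▸ neg_mem (hφ ⟨b, rfl⟩)
  exact Subtype.ext ((disjoint_def.1 hB) _ b.2 this)

theorem isCompl_range_subtype_add (hB : IsCompl B B') (hφ : LinearMap.range φ ≤ B') :
    IsCompl (LinearMap.range (B.subtype + φ)) B' := by
  refine ⟨disjoint_def.2 ?_, codisjoint_iff.2 (eq_top_iff.2 ?_)⟩
  · rintro _ ⟨b, rfl⟩ hb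
    have : (b : M) ∈ B' := by simpa using sub_mem hb (hφ ⟨b, rfl⟩)
    obtain rfl : b = 0 := Subtype.ext ((disjoint_def.1 hB.disjoint) _ b.2 this)
    simp
  · rw [← hB.sup_eq_top]
    refine sup_le (fun b hb ↦ ?_) le_sup_right
    have hgraph : (b : M) + φ ⟨b, hb⟩ ∈ LinearMap.range (B.subtype + φ) := ⟨⟨b, hb⟩, rfl⟩
    simpa using sub_mem (mem_sup_left hgraph) (mem_sup_right (hφ ⟨⟨b, hb⟩, rfl⟩) :
      φ ⟨b, hb⟩ ∈ _ ⊔ B')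

theorem sup_range_subtype_add :
    B ⊔ LinearMap.range (B.subtype + φ) = B ⊔ LinearMap.range φ := by
  refine le_antisymm (sup_le le_sup_left ?_) (sup_le le_sup_left ?_)
  · rintro _ ⟨b, rfl⟩
    exact add_mem (mem_sup_left b.2) (mem_sup_right ⟨b, rfl⟩)
  · rintro _ ⟨b, rfl⟩
    have hgraph : (b : M) + φ b ∈ LinearMap.range (B.subtype + φ) := ⟨b, rfl⟩
    simpa using sub_mem (mem_sup_right hgraph) (mem_sup_left b.2 :
      (b : M) ∈ B ⊔ LinearMap.range (B.subtype + φ))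

end Submodule

open Submodule in
theorem hasSSP_of_isDirectSummand_sup_of_linearEquiv {S : Type*} [Ring S] {M : Type*}
    [AddCommGroup M] [Module S M]
    (H : ∀ A₁ A₂ : Submodule S M, IsDirectSummand A₁ → IsDirectSummand A₂ →
      Nonempty (A₁ ≃ₗ[S] A₂) → IsDirectSummand (A₁ ⊔ A₂)) :
    HasSSP S M := by
  intro A B hA hB
  obtain ⟨A', hA⟩ := isDirectSummand_iff_exists_isCompl.1 hA
  obtain ⟨B', hB⟩ := isDirectSummand_iff_exists_isCompl.1 hB
  set q := A'.projection A hA.symm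
  set N := B.map q
  have hAN : A ⊔ N = A ⊔ B := sup_map_eq_of_sub_mem fun x _ ↦ sub_projection_mem hA.symm x
  have hNA' : N ≤ A' := map_le_iff_le_comap.2 fun x _ ↦ projection_apply_mem _ x
  have hBN : IsDirectSummand (B ⊔ N) := by
    set f := B.projection B' hB
    let φ : B →ₗ[S] M := (LinearMap.id - f) ∘ₗ q ∘ₗ B.subtype
    have hφ : LinearMap.range φ ≤ B' := by
      rintro _ ⟨b, rfl⟩
      exact sub_projection_mem hB _
    have hG : B ⊔ LinearMap.range (B.subtype + φ) = B ⊔ N := by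
      rw [sup_range_subtype_add, LinearMap.range_comp, LinearMap.range_comp, range_subtype]
      exact sup_map_eq_of_sub_mem fun x _ ↦ by simp [f]
    rw [← hG]
    exact H _ _ (isDirectSummand_iff_exists_isCompl.2 ⟨B', hB⟩)
      (isDirectSummand_iff_exists_isCompl.2 ⟨_, isCompl_range_subtype_add hB hφ⟩)
      ⟨LinearEquiv.ofInjective _ (injective_subtype_add hB.disjoint hφ)⟩
  obtain ⟨Q, hQ⟩ := isDirectSummand_iff_exists_isCompl.1 hBN
  have hN : IsCompl N (B.map (LinearMap.id - q) ⊔ Q) := by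
    have hsup : N ⊔ B.map (LinearMap.id - q) = B ⊔ N := by
      rw [sup_map_eq_of_sub_mem fun x hx ↦ by simpa using mem_map_of_mem hx, sup_comm]
    have hdisj : Disjoint N (B.map (LinearMap.id - q)) :=
      hA.disjoint.symm.mono hNA' (map_le_iff_le_comap.2 fun x _ ↦ sub_projection_mem hA.symm x)
    exact hdisj.isCompl_sup_right_of_isCompl_sup_left (hsup ▸ hQ)
  rw [← hAN]
  exact isDirectSummand_iff_exists_isCompl.2 ⟨_, hA.isCompl_sup_inf_of_le_right hNA' hN⟩

/-- `M` is SSP iff the sum of any two isomorphic direct summands is a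
direct summand. -/
theorem statement_1 (R : Type u) [Ring R] (M : Type v) [AddCommGroup M] [Module Rᵐᵒᵖ M] :
    HasSSP Rᵐᵒᵖ M ↔
      ∀ A₁ A₂ : Submodule Rᵐᵒᵖ M, IsDirectSummand A₁ → IsDirectSummand A₂ →
        Nonempty (A₁ ≃ₗ[Rᵐᵒᵖ] A₂) → IsDirectSummand (A₁ ⊔ A₂) :=
  ⟨fun hSSP A₁ A₂ h₁ h₂ _ ↦ hSSP A₁ A₂ h₁ h₂, hasSSP_of_isDirectSummand_sup_of_linearEquiv⟩
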